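/- arXiv:1606.03955 — 3 statements merged into one kernel-verified Lean document; each statement's English description precedes it below -/
import Mathlib

section
/- Let g_x be the morphism from {0,1,2}* to {0,1}* defined by g_x(0)=01110, g_x(1)=0110, g_x(2)=0. Then for every letters p,s in {0,1,2} and every word Y over {0,1,2} with |Y| ≥ 4, the word g_x(p·2·Y·Y·s) contains an occurrence of the formula AABA.AABBA, i.e., there exist non-empty binary words A and B such that both AABA and AABBA are factors of g_x(p2YYs). -/
/-!
Every image `gx a` begins and ends with `0`, and `gx 2 = 0`. Hence `gx (p 2 Y Y s)` contains
`0 0 gx(Y) gx(Y) 0`, which is `AABBA` for `A = 0`, `B = gx(Y)`; since `gx(Y)` begins with `0`, the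
prefix `0 0 gx(Y) 0` of that factor is `AABA`.
-/

def g2w (g : Fin 3 → List Bool) (w : List (Fin 3)) : List Bool :=
  (w.map g).flatten

def gx : Fin 3 → List Bool := ![[false,true,true,true,false], [false,true,true,false], [false]]

theorem List.append_append_append_prefix_of_prefix {α : Type*} {A B : List α} (h : A <+: B) :
    A ++ A ++ B ++ A <+: A ++ A ++ B ++ B ++ A := by
  simp only [List.append_assoc, List.prefix_append_right_inj]
  exact h.trans (List.prefix_append B A)

section Morphism

variable (g : Fin 3 → List Bool)

@[simp]
theorem g2w_append (u v : List (Fin 3)) : g2w g (u ++ v) = g2w g u ++ g2w g v := by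
  simp [g2w]

@[simp]
theorem g2w_cons (a : Fin 3) (u : List (Fin 3)) : g2w g (a :: u) = g a ++ g2w g u := by
  simp [g2w]

@[simp]
theorem g2w_nil : g2w g [] = [] := rfl

variable {g}

theorem prefix_g2w {c : Bool} (hg : ∀ a, [c] <+: g a) {Y : List (Fin 3)} (hY : Y ≠ []) :
    [c] <+: g2w g Y := by
  obtain ⟨y, Y', rfl⟩ := List.exists_cons_of_ne_nil hY
  rw [g2w_cons]
  exact (hg y).trans (List.prefix_append _ _)

theorem infix_g2w_square {c : Bool} {b : Fin 3} (hb : g b = [c]) (hpre : ∀ a, [c] <+: g a)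
    (hsuf : ∀ a, [c] <:+ g a) (p s : Fin 3) (Y : List (Fin 3)) :
    [c] ++ [c] ++ g2w g Y ++ g2w g Y ++ [c] <:+: g2w g ([p, b] ++ Y ++ Y ++ [s]) := by
  obtain ⟨u, hu⟩ := hsuf p
  obtain ⟨v, hv⟩ := hpre s
  refine ⟨u, v, ?_⟩
  simp only [g2w_append, g2w_cons, g2w_nil, hb, ← hu, ← hv, List.append_nil, List.append_assoc]

end Morphism

theorem gx_two : gx 2 = [false] := rfl

theorem false_prefix_gx (a : Fin 3) : [false] <+: gx a := by
  fin_cases a <;> decide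

theorem false_suffix_gx (a : Fin 3) : [false] <:+ gx a := by
  fin_cases a <;> decide

theorem stmt5 (p s : Fin 3) (Y : List (Fin 3)) (hY : 4 ≤ Y.length) :
    ∃ A B : List Bool, A ≠ [] ∧ B ≠ [] ∧
      (A ++ A ++ B ++ A) <:+: g2w gx ([p, 2] ++ Y ++ Y ++ [s]) ∧
      (A ++ A ++ B ++ B ++ A) <:+: g2w gx ([p, 2] ++ Y ++ Y ++ [s]) := by
  have hYne : Y ≠ [] := List.ne_nil_of_length_pos (by omega)
  have hB := prefix_g2w false_prefix_gx hYne
  have hAABBA := infix_g2w_square gx_two false_prefix_gx false_suffix_gx p s Y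
  refine ⟨[false], g2w gx Y, List.cons_ne_nil _ _, List.ne_nil_of_length_pos hB.length_le, ?_, hAABBA⟩
  exact (List.append_append_append_prefix_of_prefix hB).isInfix.trans hAABBA
end

section
/- Let b_3 be the fixed point of the morphism 0↦012, 1↦02, 2↦1. Suppose w is a bi-infinite ternary word avoiding the factors 00, 11, 22, 010, 212, 0202, 2020, 1021, 1201, and avoiding every factor of the form 2YY with |Y| ≥ 4. If w contains a square MM with M beginning with the letter 1 and |M| ≥ 4, then w contains a square M'M' with M' beginning with the letter 0 and |M'| ≥ 4. -/
/-!
Write `M = 1N`. The letter before the square `MM` is neither `1` (no `11`) nor `2` (no `2YY`),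
so `0MM` is a factor. Then the second letter of `M` is `2` (no `010`, no `11`), so the last letter
of `M`, which precedes `12` at the start of the second copy, is `0` (no `11`, no `212`). Hence
`M = 12P0`, and the factor `0·12P0·12P0` begins with the square `(012P)(012P)`.
-/

def FacZ {α : Type*} (w : ℤ → α) (u : List α) : Prop :=
  ∃ i : ℤ, u = (List.range u.length).map (fun k => w (i + k))

namespace FacZ

variable {α : Type*} {w : ℤ → α} {u v : List α}

theorem iff_getElem : FacZ w u ↔ ∃ i : ℤ, ∀ k (hk : k < u.length), u[k] = w (i + k) := by
  simp only [FacZ, bind_pure_comp, List.map_eq_map, List.map_map, Function.comp_def]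
  refine exists_congr fun i => ⟨fun h k hk => ?_, fun h => List.ext_getElem (by simp) ?_⟩
  · rw [List.getElem_of_eq h hk]
    simp
  · intro k hk _
    simp [h k hk]

theorem of_infix (h : FacZ w u) (hvu : v <:+: u) : FacZ w v := by
  obtain ⟨s, t, rfl⟩ := hvu
  obtain ⟨i, hi⟩ := iff_getElem.mp h
  refine iff_getElem.mpr ⟨i + s.length, fun k hk => ?_⟩
  have hsk : s.length + k < (s ++ v ++ t).length := by simp; omega
  calc v[k] = (s ++ v ++ t)[s.length + k] := by simp [hk]
    _ = w (i + s.length + k) := by rw [hi _ hsk]; push_cast; ring_nf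

theorem exists_cons (h : FacZ w u) : ∃ a, FacZ w (a :: u) := by
  obtain ⟨i, hi⟩ := iff_getElem.mp h
  refine ⟨w (i - 1), iff_getElem.mpr ⟨i - 1, fun k hk => ?_⟩⟩
  cases k with
  | zero => simp
  | succ k =>
    rw [List.getElem_cons_succ, hi k (by simpa using hk)]
    push_cast
    ring_nf

end FacZ

theorem eq_zero_of_facZ_cons_square {w : ℤ → Fin 3} (h11 : ¬ FacZ w [1, 1])
    (h2YY : ∀ Y : List (Fin 3), 4 ≤ Y.length → ¬ FacZ w (2 :: (Y ++ Y)))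
    {a : Fin 3} {N : List (Fin 3)} (hlen : 4 ≤ (1 :: N).length)
    (h : FacZ w (a :: (1 :: N ++ 1 :: N))) : a = 0 := by
  fin_cases a
  · rfl
  · exact absurd (h.of_infix ⟨[], N ++ 1 :: N, rfl⟩) h11
  · exact absurd h (h2YY _ hlen)

theorem eq_two_of_facZ_zero_one {w : ℤ → Fin 3} (h11 : ¬ FacZ w [1, 1])
    (h010 : ¬ FacZ w [0, 1, 0]) {b : Fin 3} (h : FacZ w [0, 1, b]) : b = 2 := by
  fin_cases b
  · exact absurd h h010
  · exact absurd (h.of_infix ⟨[0], [], rfl⟩) h11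
  · rfl

theorem eq_zero_of_facZ_one_two {w : ℤ → Fin 3} (h11 : ¬ FacZ w [1, 1])
    (h212 : ¬ FacZ w [2, 1, 2]) {c : Fin 3} (h : FacZ w [c, 1, 2]) : c = 0 := by
  fin_cases c
  · rfl
  · exact absurd (h.of_infix ⟨[], [2], rfl⟩) h11
  · exact absurd h h212

theorem stmt9 (w : ℤ → Fin 3)
    (h1 : ∀ u ∈ ([[0,0],[1,1],[2,2],[0,1,0],[2,1,2],[0,2,0,2],[2,0,2,0],[1,0,2,1],[1,2,0,1]] : List (List (Fin 3))), ¬ FacZ w u)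
    (h2 : ∀ Y : List (Fin 3), 4 ≤ Y.length → ¬ FacZ w (2 :: (Y ++ Y)))
    (h3 : ∃ M : List (Fin 3), M.head? = some 1 ∧ 4 ≤ M.length ∧ FacZ w (M ++ M)) :
    ∃ M' : List (Fin 3), M'.head? = some 0 ∧ 4 ≤ M'.length ∧ FacZ w (M' ++ M') := by
  have h11 := h1 [1, 1] (by simp)
  obtain ⟨M, hM, hlen, hsq⟩ := h3
  obtain ⟨N, rfl⟩ : ∃ N, M = 1 :: N := ⟨M.tail, (List.cons_head?_tail hM).symm⟩
  obtain ⟨a, ha⟩ := hsq.exists_cons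
  obtain rfl := eq_zero_of_facZ_cons_square h11 h2 hlen ha
  obtain ⟨b, N, rfl⟩ : ∃ b N', N = b :: N' :=
    N.exists_cons_of_ne_nil (by rintro rfl; simp at hlen)
  obtain rfl := eq_two_of_facZ_zero_one h11 (h1 [0, 1, 0] (by simp)) (ha.of_infix ⟨[], _, rfl⟩)
  obtain ⟨P, c, rfl⟩ : ∃ P c, N = P ++ [c] :=
    N.eq_nil_or_concat'.resolve_left (by rintro rfl; simp at hlen)
  obtain rfl := eq_zero_of_facZ_one_two h11 (h1 [2, 1, 2] (by simp)) (c := c)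
    (ha.of_infix ⟨[0, 1, 2] ++ P, P ++ [c], by simp⟩)
  exact ⟨0 :: 1 :: 2 :: P, rfl, by simpa using hlen, ha.of_infix ⟨[], [0], by simp⟩⟩
end

section
/- Every recurrent bi-infinite binary word that avoids the formulas AABA.BABA and ABAA.ABAB and contains no square of period at least 3 has the property that its only square factors are among {00, 11, 0101} or among {00, 11, 1010}. -/
def RecurrentZ {α : Type*} (w : ℤ → α) : Prop :=
  ∀ u : List α, FacZ w u → ∀ N : ℤ, ∃ i : ℤ, N ≤ i ∧
    u = (List.range u.length).map (fun k => w (i + k))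

/-!
Squares of period 1 are allowed, and `aaaa` is an instance of AABA.BABA with `A = B = a`, so
the only candidate squares of period 2 are `0101` and `1010`. If both occur, then ABAA.ABAB with
`A = a`, `B = !a` forbids `a(!a)aa`, so every factor `a(!a)a` continues alternately; starting
from an occurrence of `0101` the word is therefore 2-periodic, which yields the square
`(0101)(0101)` of period 4.
-/

def AvoidsAABA_BABA {α : Type*} (w : ℤ → α) : Prop :=
  ¬ ∃ A B : List α, A ≠ [] ∧ B ≠ [] ∧ FacZ w (A ++ A ++ B ++ A) ∧ FacZ w (B ++ A ++ B ++ A)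

def AvoidsABAA_ABAB {α : Type*} (w : ℤ → α) : Prop :=
  ¬ ∃ A B : List α, A ≠ [] ∧ B ≠ [] ∧ FacZ w (A ++ B ++ A ++ A) ∧ FacZ w (A ++ B ++ A ++ B)

section Factors

variable {α : Type*} {w : ℤ → α}

def window (w : ℤ → α) (i : ℤ) (n : ℕ) : List α :=
  (List.range n).map fun k : ℕ => w (i + k)

-- `FacZ` casts `List.range u.length` to `List ℤ` through the list monad; this removes the cast.
theorem facZ_iff {u : List α} :
    FacZ w u ↔ ∃ i : ℤ, u = (List.range u.length).map fun k : ℕ => w (i + k) := by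
  simp [FacZ, ← List.map_eq_flatMap, Function.comp_def]

theorem facZ_window_append_window_of_periodic {i : ℤ} {p : ℕ}
    (hper : ∀ k < p, w (i + (p + k : ℕ)) = w (i + k)) :
    FacZ w (window w i p ++ window w i p) := by
  refine facZ_iff.2 ⟨i, ?_⟩
  simp only [window, List.length_append, List.length_map, List.length_range, List.range_add,
    List.map_append, List.map_map]
  congr 1
  exact List.map_congr_left fun k hk => (hper k (List.mem_range.1 hk)).symm

theorem facZ_four_iff {a b c d : α} :
    FacZ w [a, b, c, d] ↔ ∃ i, w i = a ∧ w (i + 1) = b ∧ w (i + 2) = c ∧ w (i + 3) = d := by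
  simp [FacZ, List.range_succ, eq_comm]

theorem AvoidsAABA_BABA.not_facZ_four (h : AvoidsAABA_BABA w) (a : α) : ¬ FacZ w [a, a, a, a] :=
  fun ha => h ⟨[a], [a], List.cons_ne_nil _ _, List.cons_ne_nil _ _, ha, ha⟩

theorem AvoidsABAA_ABAB.not_facZ_of_facZ (h : AvoidsABAA_ABAB w) {a b : α}
    (hab : FacZ w [a, b, a, b]) : ¬ FacZ w [a, b, a, a] :=
  fun haa => h ⟨[a], [b], List.cons_ne_nil _ _, List.cons_ne_nil _ _, haa, hab⟩

end Factors

section Binary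

variable {w : ℤ → Bool}

theorem AvoidsABAA_ABAB.alternates_succ (h : AvoidsABAA_ABAB w)
    (halt : ∀ a, FacZ w [a, !a, a, !a]) {j : ℤ}
    (h₀ : w (j + 1) = !w j) (h₁ : w (j + 2) = !w (j + 1)) : w (j + 3) = !w (j + 2) := by
  by_contra h₂
  refine h.not_facZ_of_facZ (halt (w j)) (facZ_four_iff.2 ⟨j, rfl, h₀, ?_, ?_⟩)
  · simp [h₁, h₀]
  · simpa [h₀, h₁] using h₂

theorem AvoidsABAA_ABAB.alternates (h : AvoidsABAA_ABAB w)
    (halt : ∀ a, FacZ w [a, !a, a, !a]) {i : ℤ}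
    (h₀ : w (i + 1) = !w i) (h₁ : w (i + 2) = !w (i + 1)) (n : ℕ) :
    w (i + n + 1) = !w (i + n) := by
  suffices ∀ n : ℕ, w (i + n + 1) = !w (i + n) ∧ w (i + n + 2) = !w (i + n + 1) from (this n).1
  intro n
  induction n with
  | zero => simpa using ⟨h₀, h₁⟩
  | succ n ih =>
    rw [Nat.cast_succ, ← add_assoc, add_assoc _ 1 1, add_assoc (i + n) 1 2, one_add_one_eq_two,
      show (1 : ℤ) + 2 = 3 by norm_num]
    exact ⟨ih.2, h.alternates_succ halt ih.1 ih.2⟩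

theorem AvoidsABAA_ABAB.not_facZ_both_alternating (h : AvoidsABAA_ABAB w)
    (hsq : ∀ u : List Bool, 3 ≤ u.length → ¬ FacZ w (u ++ u))
    (hF : FacZ w [false, true, false, true]) : ¬ FacZ w [true, false, true, false] := by
  intro hT
  have halt : ∀ a, FacZ w [a, !a, a, !a] := Bool.forall_bool.2 ⟨hF, hT⟩
  obtain ⟨i, e₀, e₁, e₂, -⟩ := facZ_four_iff.1 hF
  have hstep := h.alternates halt (i := i) (by rw [e₀, e₁]; rfl) (by rw [e₁, e₂]; rfl)
  have hper : ∀ n : ℕ, w (i + (n + 2 : ℕ)) = w (i + n) := fun n => by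
    rw [show i + (n + 2 : ℕ) = i + (n + 1 : ℕ) + 1 by push_cast; ring, hstep, Nat.cast_succ,
      ← add_assoc, hstep, Bool.not_not]
  refine hsq (window w i 4) (by simp [window]) (facZ_window_append_window_of_periodic fun k _ => ?_)
  rw [show 4 + k = k + 2 + 2 by ring, hper, hper]

theorem root_cases_of_facZ_append_self (h : AvoidsAABA_BABA w)
    (hsq : ∀ u : List Bool, 3 ≤ u.length → ¬ FacZ w (u ++ u)) {u : List Bool} (hu : u ≠ [])
    (huu : FacZ w (u ++ u)) : u = [false] ∨ u = [true] ∨ u = [false, true] ∨ u = [true, false] :=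
  match u, hu, huu with
  | [a], _, _ => by cases a <;> simp
  | [a, b], _, huu => by
    cases a <;> cases b <;> first | exact (h.not_facZ_four _ huu).elim | simp
  | _ :: _ :: _ :: _, _, huu => (hsq _ (by simp) huu).elim

end Binary

theorem stmt18_general (w : ℤ → Bool)
    (h1 : ¬ ∃ A B : List Bool, A ≠ [] ∧ B ≠ [] ∧
      FacZ w (A ++ A ++ B ++ A) ∧ FacZ w (B ++ A ++ B ++ A))
    (h2 : ¬ ∃ A B : List Bool, A ≠ [] ∧ B ≠ [] ∧
      FacZ w (A ++ B ++ A ++ A) ∧ FacZ w (A ++ B ++ A ++ B))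
    (h3 : ∀ u : List Bool, 3 ≤ u.length → ¬ FacZ w (u ++ u)) :
    (∀ u : List Bool, u ≠ [] → FacZ w (u ++ u) →
      u ∈ [[false], [true], [false, true]]) ∨
    (∀ u : List Bool, u ≠ [] → FacZ w (u ++ u) →
      u ∈ [[false], [true], [true, false]]) := by
  have hexcl := AvoidsABAA_ABAB.not_facZ_both_alternating h2 h3
  by_cases hF : FacZ w [false, true, false, true]
  · refine .inl fun u hu huu => ?_
    obtain rfl | rfl | rfl | rfl := root_cases_of_facZ_append_self h1 h3 hu huu
    any_goals simp
    exact absurd huu (hexcl hF)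
  · refine .inr fun u hu huu => ?_
    obtain rfl | rfl | rfl | rfl := root_cases_of_facZ_append_self h1 h3 hu huu
    any_goals simp
    exact absurd huu hF

theorem stmt18 (w : ℤ → Bool) (hrec : RecurrentZ w)
    (h1 : ¬ ∃ A B : List Bool, A ≠ [] ∧ B ≠ [] ∧
      FacZ w (A ++ A ++ B ++ A) ∧ FacZ w (B ++ A ++ B ++ A))
    (h2 : ¬ ∃ A B : List Bool, A ≠ [] ∧ B ≠ [] ∧
      FacZ w (A ++ B ++ A ++ A) ∧ FacZ w (A ++ B ++ A ++ B))
    (h3 : ∀ u : List Bool, 3 ≤ u.length → ¬ FacZ w (u ++ u)) :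
    (∀ u : List Bool, u ≠ [] → FacZ w (u ++ u) →
      u ∈ [[false], [true], [false, true]]) ∨
    (∀ u : List Bool, u ≠ [] → FacZ w (u ++ u) →
      u ∈ [[false], [true], [true, false]]) :=
  stmt18_general w h1 h2 h3
end
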